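/- arXiv:1904.11072 — 2 statements merged into one kernel-verified Lean document; each statement's English description precedes it below -/
import Mathlib

section
/- Let (X,G,Φ) be a Cantor action with a fixed compatible metric d, and suppose the action is locally quasi-analytic: there exists ε > 0 such that for every adapted clopen set U with diam(U) < ε, every adapted clopen set V ⊆ U, and all g₁, g₂ ∈ G, if Φ(g₁)(z) = Φ(g₂)(z) for all z ∈ V then Φ(g₁)(z) = Φ(g₂)(z) for all z ∈ U. Then the germinal groupoid of the action is Hausdorff; concretely, for all g, g' ∈ G and x ∈ X with Φ(g)(x) = Φ(g')(x): if there exist a sequence (x_i) in X converging to x and open sets W_i with x_i ∈ W_i such that Φ(g) and Φ(g') agree on W_i for every i, then Φ(g) and Φ(g') agree on some open neighborhood of x. -/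
open Set Topology Filter

section CantorActionDefs

variable {X : Type*} [MetricSpace X] {G : Type*} [Group G]

/-- `Φ : G → Homeo(X)` is a group homomorphism, i.e. an action of `G` on `X` by
homeomorphisms. -/
def IsActionHom (Φ : G → X ≃ₜ X) : Prop :=
  (∀ x : X, Φ 1 x = x) ∧ ∀ g h : G, ∀ x : X, Φ (g * h) x = Φ g (Φ h x)

/-- The action is minimal: every orbit is dense. -/
def IsMinimalAction (Φ : G → X ≃ₜ X) : Prop :=
  ∀ x : X, Dense (Set.range fun g : G => Φ g x)

/-- The family `{Φ g : g ∈ G}` is equicontinuous with respect to the metric on `X`. -/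
def IsEquicontinuousAction (Φ : G → X ≃ₜ X) : Prop :=
  ∀ ε : ℝ, 0 < ε → ∃ δ : ℝ, 0 < δ ∧
    ∀ g : G, ∀ x y : X, dist x y < δ → dist (Φ g x) (Φ g y) < ε

/-- A Cantor action: a minimal equicontinuous action by homeomorphisms. -/
def IsCantorAction (Φ : G → X ≃ₜ X) : Prop :=
  IsActionHom Φ ∧ IsMinimalAction Φ ∧ IsEquicontinuousAction Φ

/-- A clopen subset adapted to the action: nonempty, clopen, and any translate meeting it
equals it. -/
def IsAdapted (Φ : G → X ≃ₜ X) (U : Set X) : Prop :=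
  U.Nonempty ∧ IsClopen U ∧ ∀ g : G, (Φ g '' U ∩ U).Nonempty → Φ g '' U = U

/-- The Ellis (closure) group `G(Φ)`: the closure of `{Φ g : g ∈ G}` in `C(X,X)` with the
compact-open topology. -/
def actionClosure (Φ : G → X ≃ₜ X) : Set C(X, X) :=
  closure (Set.range fun g : G => (Φ g : C(X, X)))

/-- An adapted neighborhood basis at `x`: a properly descending chain of adapted clopen
sets starting at `X`, containing `x`, with intersection `{x}`. -/
def IsAdaptedBasis (Φ : G → X ≃ₜ X) (x : X) (U : ℕ → Set X) : Prop :=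
  U 0 = Set.univ ∧ (∀ ℓ : ℕ, IsAdapted Φ (U ℓ)) ∧ (∀ ℓ : ℕ, x ∈ U ℓ) ∧
    (∀ ℓ : ℕ, U (ℓ + 1) ⊂ U ℓ) ∧ (⋂ ℓ : ℕ, U ℓ) = ({x} : Set X)

/-- The stabilizer chain `K_ℓ`: elements of the Ellis group fixing `U ℓ` pointwise. -/
def stabChain (Φ : G → X ≃ₜ X) (U : ℕ → Set X) (ℓ : ℕ) : Set C(X, X) :=
  {f ∈ actionClosure Φ | ∀ z ∈ U ℓ, f z = z}

/-- The stabilizer chain is eventually constant (the action is stable along `U`). -/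
def IsStableChain (Φ : G → X ≃ₜ X) (U : ℕ → Set X) : Prop :=
  ∃ ℓ₀ : ℕ, ∀ ℓ : ℕ, ℓ₀ ≤ ℓ → stabChain Φ U ℓ = stabChain Φ U ℓ₀

/-- The action of the Ellis group is locally completely quasi-analytic. -/
def IsLCQA (Φ : G → X ≃ₜ X) : Prop :=
  ∃ ε : ℝ, 0 < ε ∧ ∀ U : Set X, IsAdapted Φ U → Metric.diam U < ε →
    ∀ V : Set X, IsAdapted Φ V → V ⊆ U →
      ∀ f₁ ∈ actionClosure Φ, ∀ f₂ ∈ actionClosure Φ,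
        (∀ z ∈ V, f₁ z = f₂ z) → ∀ z ∈ U, f₁ z = f₂ z

/-- `f` is a non-Hausdorff element of the Ellis group at `x`. -/
def IsNonHausdorffElem (Φ : G → X ≃ₜ X) (f : C(X, X)) (x : X) : Prop :=
  f ∈ actionClosure Φ ∧ f x = x ∧
    (∀ W : Set X, IsClopen W → x ∈ W → ¬ ∀ z ∈ W, f z = z) ∧
    ∃ (xs : ℕ → X) (W : ℕ → Set X), Filter.Tendsto xs Filter.atTop (nhds x) ∧
      ∀ i : ℕ, xs i ∈ W i ∧ IsClopen (W i) ∧ ⇑f '' W i = W i ∧ ∀ z ∈ W i, f z = z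

/-- The restrictions to an invariant set `U` of the maps `Φ g` with `Φ g (U) = U`,
as elements of `C(U,U)`. -/
def restrictedMaps (Φ : G → X ≃ₜ X) (U : Set X) : Set C(U, U) :=
  {u : C(U, U) | ∃ g : G, Φ g '' U = U ∧ ∀ z : U, (u z : X) = Φ g (z : X)}

/-- The stabilizer subgroup `G_U = {g : G | Φ g (U) = U}` of a set `U`. -/
def setStabilizer (Φ : G → X ≃ₜ X) (hΦ : IsActionHom Φ) (U : Set X) : Subgroup G where
  carrier := {g : G | Φ g '' U = U}
  one_mem' := by
    show ⇑(Φ 1) '' U = U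
    have h : ⇑(Φ 1) = id := funext hΦ.1
    rw [h, Set.image_id]
  mul_mem' := by
    intro a b ha hb
    show ⇑(Φ (a * b)) '' U = U
    have h : ⇑(Φ (a * b)) = ⇑(Φ a) ∘ ⇑(Φ b) := funext fun z => hΦ.2 a b z
    rw [h, Set.image_comp]
    rw [show ⇑(Φ b) '' U = U from hb, show ⇑(Φ a) '' U = U from ha]
  inv_mem' := by
    intro a ha
    show ⇑(Φ a⁻¹) '' U = U
    have hcomp : ⇑(Φ a⁻¹) ∘ ⇑(Φ a) = id := funext fun z => by
      show Φ a⁻¹ (Φ a z) = z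
      have h2 := hΦ.2 a⁻¹ a z
      rw [inv_mul_cancel] at h2
      rw [← h2]
      exact hΦ.1 z
    calc ⇑(Φ a⁻¹) '' U = ⇑(Φ a⁻¹) '' (⇑(Φ a) '' U) := by
            rw [show ⇑(Φ a) '' U = U from ha]
      _ = (⇑(Φ a⁻¹) ∘ ⇑(Φ a)) '' U := (Set.image_comp _ _ _).symm
      _ = U := by rw [hcomp, Set.image_id]

end CantorActionDefs

section ChainDefs

variable {G : Type*} [Group G]

/-- A group chain in `G`: descending subgroups starting at `G`, each of finite index in
the previous one. -/
def IsGroupChain (K : ℕ → Subgroup G) : Prop :=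
  K 0 = ⊤ ∧ ∀ ℓ : ℕ, K (ℓ + 1) ≤ K ℓ ∧ (K (ℓ + 1)).relIndex (K ℓ) ≠ 0

/-- The inverse limit `lim← G ⧸ C ℓ` of the coset spaces along a chain, as a subset of
the product. -/
def chainLimitSet (C : ℕ → Subgroup G) : Set (∀ ℓ : ℕ, G ⧸ C ℓ) :=
  {σ | ∀ ℓ : ℕ, ∃ g : G, σ ℓ = (g : G ⧸ C ℓ) ∧ σ (ℓ + 1) = (g : G ⧸ C (ℓ + 1))}

/-- The inverse limit topology on `lim← G ⧸ C ℓ`: the subspace topology from the product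
of the discrete coset spaces. -/
def chainLimitTop (C : ℕ → Subgroup G) : TopologicalSpace (chainLimitSet C) :=
  TopologicalSpace.induced Subtype.val
    (@Pi.topologicalSpace ℕ (fun ℓ => G ⧸ C ℓ) fun _ => ⊥)

/-- The basepoint `(e C_ℓ)_ℓ` of the inverse limit. -/
def chainBasepoint (C : ℕ → Subgroup G) : chainLimitSet C :=
  ⟨fun ℓ => ((1 : G) : G ⧸ C ℓ), fun _ => ⟨1, rfl, rfl⟩⟩

theorem smul_mem_chainLimitSet {C : ℕ → Subgroup G} (g : G) {σ : ∀ ℓ : ℕ, G ⧸ C ℓ}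
    (hσ : σ ∈ chainLimitSet C) : (fun ℓ => g • σ ℓ) ∈ chainLimitSet C := by
  intro ℓ
  obtain ⟨k, h1, h2⟩ := hσ ℓ
  refine ⟨g * k, ?_, ?_⟩
  · show g • σ ℓ = _
    rw [h1]; rfl
  · show g • σ (ℓ + 1) = _
    rw [h2]; rfl

/-- The conjugate subgroup `g H g⁻¹`. -/
def conjSubgroup (g : G) (H : Subgroup G) : Subgroup G :=
  H.map (MulAut.conj g).toMonoidHom

/-- Equivalence of group chains (interlacing). -/
def ChainsEquivalent (Gc Hc : ℕ → Subgroup G) : Prop :=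
  ∃ K : ℕ → Subgroup G, IsGroupChain K ∧
    ∃ ls js : ℕ → ℕ, StrictMono ls ∧ StrictMono js ∧
      ∀ k : ℕ, K (2 * k) = Gc (ls k) ∧ K (2 * k + 1) = Hc (js k)

/-- Conjugate equivalence of group chains. -/
def ChainsConjugateEquivalent (Gc Hc : ℕ → Subgroup G) : Prop :=
  ∃ gs : ℕ → G, (∀ ℓ : ℕ, (gs ℓ)⁻¹ * gs (ℓ + 1) ∈ Gc ℓ) ∧
    ChainsEquivalent (fun ℓ => conjSubgroup (gs ℓ) (Gc ℓ)) Hc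

end ChainDefs

section TwoSpaces

variable {X : Type*} [MetricSpace X] {X' : Type*} [MetricSpace X']
variable {G : Type*} [Group G] {G' : Type*} [Group G']

/-- A continuous orbit equivalence between two actions, implemented by a homeomorphism
`h : X → X'` with locally constant orbit transfer functions. -/
def IsContinuousOrbitEquivalence (Φ : G → X ≃ₜ X) (Ψ : G' → X' ≃ₜ X') (h : X ≃ₜ X') :
    Prop :=
  (∀ (x : X) (g : G), ∃ (k : G') (O : Set X), IsOpen O ∧ x ∈ O ∧
      ∀ z ∈ O, Ψ k (h z) = h (Φ g z)) ∧
    ∀ (y : X') (k : G'), ∃ (g : G) (O : Set X'), IsOpen O ∧ y ∈ O ∧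
      ∀ w ∈ O, Φ g (h.symm w) = h.symm (Ψ k w)

end TwoSpaces

/-!
Fix a clopen `U₀ ∋ x` and let `U` be the set of points whose `G`-itinerary with respect to the
partition `{U₀, U₀ᶜ}` agrees with that of `x`. The itinerary classes are permuted by `G`, so `U`
is adapted; `U ⊆ U₀`; `U` is closed as an intersection of clopen sets, and open by
equicontinuity, since on a compact space the relation "both in `U₀` or both outside" is an
entourage. Adapted sets therefore form a neighbourhood basis at every point. Given the germ
condition, pick a small adapted `U ∋ x`, a point `xs i ∈ U`, and an adapted `V ∋ xs i` inside
`U ∩ W i`: local quasi-analyticity spreads the agreement of `Φ g` and `Φ g'` from `V` to `U`.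
-/

open Uniformity

section AdaptedBasis

variable {X : Type*} [MetricSpace X] {G : Type*} {Φ : G → X ≃ₜ X}

theorem IsActionHom.inv_apply_apply [Group G] (hΦ : IsActionHom Φ) (g : G) (x : X) :
    Φ g⁻¹ (Φ g x) = x := by
  rw [← hΦ.2, inv_mul_cancel, hΦ.1]

theorem IsActionHom.apply_inv_apply [Group G] (hΦ : IsActionHom Φ) (g : G) (x : X) :
    Φ g (Φ g⁻¹ x) = x := by
  simpa using hΦ.inv_apply_apply g⁻¹ x

theorem IsEquicontinuousAction.uniformEquicontinuous (hΦ : IsEquicontinuousAction Φ) :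
    UniformEquicontinuous fun g => ⇑(Φ g) :=
  Metric.uniformEquicontinuous_iff.2 fun ε hε =>
    let ⟨δ, hδ, h⟩ := hΦ ε hε
    ⟨δ, hδ, fun x y hxy g => h g x y hxy⟩

theorem IsClopen.setOf_mem_iff_mem_mem_uniformity [CompactSpace X] {U : Set X}
    (hU : IsClopen U) : {p : X × X | p.1 ∈ U ↔ p.2 ∈ U} ∈ 𝓤 X := by
  have hopen : IsOpen {p : X × X | p.1 ∈ U ↔ p.2 ∈ U} := by
    have : {p : X × X | p.1 ∈ U ↔ p.2 ∈ U} = U ×ˢ U ∪ Uᶜ ×ˢ Uᶜ := by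
      ext p
      by_cases h₁ : p.1 ∈ U <;> by_cases h₂ : p.2 ∈ U <;> simp [h₁, h₂]
    rw [this]
    exact (hU.isOpen.prod hU.isOpen).union (hU.compl.isOpen.prod hU.compl.isOpen)
  rw [← nhdsSet_diagonal_eq_uniformity]
  exact hopen.mem_nhdsSet.2 fun p (hp : p.1 = p.2) => by simp [hp]

def itinerarySet (Φ : G → X ≃ₜ X) (U₀ : Set X) (x : X) : Set X :=
  {y | ∀ g, Φ g y ∈ U₀ ↔ Φ g x ∈ U₀}

theorem mem_itinerarySet_self (U₀ : Set X) (x : X) : x ∈ itinerarySet Φ U₀ x :=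
  fun _ => Iff.rfl

theorem itinerarySet_eq_of_mem {U₀ : Set X} {x y : X} (hy : y ∈ itinerarySet Φ U₀ x) :
    itinerarySet Φ U₀ y = itinerarySet Φ U₀ x :=
  Set.ext fun _ => forall_congr' fun g => by rw [hy g]

theorem itinerarySet_subset [Group G] (hΦ : IsActionHom Φ) {U₀ : Set X} {x : X}
    (hx : x ∈ U₀) : itinerarySet Φ U₀ x ⊆ U₀ := fun y hy => by
  simpa [hΦ.1] using (hy 1).2 (by simpa [hΦ.1] using hx)

theorem image_itinerarySet_subset [Group G] (hΦ : IsActionHom Φ) (U₀ : Set X) (h : G)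
    (x : X) : Φ h '' itinerarySet Φ U₀ x ⊆ itinerarySet Φ U₀ (Φ h x) := by
  rintro _ ⟨y, hy, rfl⟩ g
  rw [← hΦ.2, ← hΦ.2]
  exact hy (g * h)

theorem image_itinerarySet [Group G] (hΦ : IsActionHom Φ) (U₀ : Set X) (h : G) (x : X) :
    Φ h '' itinerarySet Φ U₀ x = itinerarySet Φ U₀ (Φ h x) := by
  refine (image_itinerarySet_subset hΦ U₀ h x).antisymm fun z hz => ?_
  refine ⟨Φ h⁻¹ z, ?_, hΦ.apply_inv_apply h z⟩
  simpa [hΦ.inv_apply_apply] using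
    image_itinerarySet_subset hΦ U₀ h⁻¹ (Φ h x) ⟨z, hz, rfl⟩

theorem isClosed_itinerarySet {U₀ : Set X} (hU₀ : IsClopen U₀) (x : X) :
    IsClosed (itinerarySet Φ U₀ x) := by
  simp only [itinerarySet, ofPred_forall]
  refine isClosed_iInter fun g => ?_
  by_cases hx : Φ g x ∈ U₀
  · simp only [hx, iff_true]
    exact hU₀.isClosed.preimage (Φ g).continuous
  · simp only [hx, iff_false]
    exact hU₀.isOpen.isClosed_compl.preimage (Φ g).continuous

theorem isOpen_itinerarySet [CompactSpace X] (hΦ : IsEquicontinuousAction Φ) {U₀ : Set X}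
    (hU₀ : IsClopen U₀) (x : X) : IsOpen (itinerarySet Φ U₀ x) := by
  refine isOpen_iff_mem_nhds.2 fun y hy => ?_
  filter_upwards [hΦ.uniformEquicontinuous.equicontinuous y _
    hU₀.setOf_mem_iff_mem_mem_uniformity] with z hz g
  exact (hz g).symm.trans (hy g)

theorem isAdapted_itinerarySet [Group G] [CompactSpace X] (hhom : IsActionHom Φ)
    (hequi : IsEquicontinuousAction Φ) {U₀ : Set X} (hU₀ : IsClopen U₀) (x : X) :
    IsAdapted Φ (itinerarySet Φ U₀ x) := by
  refine ⟨⟨x, mem_itinerarySet_self U₀ x⟩,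
    ⟨isClosed_itinerarySet hU₀ x, isOpen_itinerarySet hequi hU₀ x⟩, ?_⟩
  rintro h ⟨w, hw, hwx⟩
  rw [image_itinerarySet hhom] at hw ⊢
  rw [← itinerarySet_eq_of_mem hw, itinerarySet_eq_of_mem hwx]

theorem exists_isAdapted_subset_of_isOpen [Group G] [CompactSpace X]
    [TotallyDisconnectedSpace X] (hhom : IsActionHom Φ) (hequi : IsEquicontinuousAction Φ)
    {O : Set X} (hO : IsOpen O) {x : X} (hx : x ∈ O) : ∃ U, IsAdapted Φ U ∧ x ∈ U ∧ U ⊆ O := by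
  obtain ⟨U₀, hU₀, hxU₀, hU₀O⟩ := compact_exists_isClopen_in_isOpen hO hx
  exact ⟨itinerarySet Φ U₀ x, isAdapted_itinerarySet hhom hequi hU₀ x,
    mem_itinerarySet_self U₀ x, (itinerarySet_subset hhom hxU₀).trans hU₀O⟩

theorem exists_isAdapted_diam_lt [Group G] [CompactSpace X] [TotallyDisconnectedSpace X]
    (hhom : IsActionHom Φ) (hequi : IsEquicontinuousAction Φ) (x : X) {ε : ℝ} (hε : 0 < ε) :
    ∃ U, IsAdapted Φ U ∧ x ∈ U ∧ Metric.diam U < ε := by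
  obtain ⟨U, hU, hxU, hUball⟩ := exists_isAdapted_subset_of_isOpen hhom hequi
    Metric.isOpen_ball (Metric.mem_ball_self (by positivity : 0 < ε / 4))
  refine ⟨U, hU, hxU, ?_⟩
  calc Metric.diam U ≤ Metric.diam (Metric.ball x (ε / 4)) :=
        Metric.diam_mono hUball Metric.isBounded_ball
    _ ≤ 2 * (ε / 4) := Metric.diam_ball (by positivity)
    _ < ε := by linarith

end AdaptedBasis

theorem stmt15_general {X : Type*} [MetricSpace X] [CompactSpace X] [TotallyDisconnectedSpace X]
    {G : Type*} [Group G] (Φ : G → X ≃ₜ X) (hΦ : IsCantorAction Φ)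
    (hlqa : ∃ ε : ℝ, 0 < ε ∧ ∀ U : Set X, IsAdapted Φ U → Metric.diam U < ε →
        ∀ V : Set X, IsAdapted Φ V → V ⊆ U → ∀ g₁ g₂ : G,
          (∀ z ∈ V, Φ g₁ z = Φ g₂ z) → ∀ z ∈ U, Φ g₁ z = Φ g₂ z) :
    ∀ (g g' : G) (x : X), Φ g x = Φ g' x →
      (∃ (xs : ℕ → X) (W : ℕ → Set X), Filter.Tendsto xs Filter.atTop (nhds x) ∧
          ∀ i : ℕ, IsOpen (W i) ∧ xs i ∈ W i ∧ ∀ z ∈ W i, Φ g z = Φ g' z) →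
      ∃ O : Set X, IsOpen O ∧ x ∈ O ∧ ∀ z ∈ O, Φ g z = Φ g' z := by
  rintro g g' x - ⟨xs, W, hxs, hW⟩
  obtain ⟨ε, hε, hlqa⟩ := hlqa
  obtain ⟨hhom, -, hequi⟩ := hΦ
  obtain ⟨U, hU, hxU, hUdiam⟩ := exists_isAdapted_diam_lt hhom hequi x hε
  obtain ⟨i, hxsU⟩ := (hxs.eventually_mem (hU.2.1.isOpen.mem_nhds hxU)).exists
  obtain ⟨hWopen, hxsW, hagree⟩ := hW i
  obtain ⟨V, hV, -, hVUW⟩ := exists_isAdapted_subset_of_isOpen hhom hequi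
    (hU.2.1.isOpen.inter hWopen) ⟨hxsU, hxsW⟩
  exact ⟨U, hU.2.1.isOpen, hxU, hlqa U hU hUdiam V hV (hVUW.trans inter_subset_left) g g'
    fun z hz => hagree z (hVUW hz).2⟩

/-- A locally quasi-analytic Cantor action has Hausdorff germinal
groupoid (Winkelnkemper's criterion). -/
theorem stmt15 {X : Type*} [MetricSpace X] [CompactSpace X] [TotallyDisconnectedSpace X]
    [Nonempty X] (hX : Perfect (Set.univ : Set X))
    {G : Type*} [Group G] [Countable G] (Φ : G → X ≃ₜ X) (hΦ : IsCantorAction Φ)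
    (hlqa : ∃ ε : ℝ, 0 < ε ∧ ∀ U : Set X, IsAdapted Φ U → Metric.diam U < ε →
        ∀ V : Set X, IsAdapted Φ V → V ⊆ U → ∀ g₁ g₂ : G,
          (∀ z ∈ V, Φ g₁ z = Φ g₂ z) → ∀ z ∈ U, Φ g₁ z = Φ g₂ z) :
    ∀ (g g' : G) (x : X), Φ g x = Φ g' x →
      (∃ (xs : ℕ → X) (W : ℕ → Set X), Filter.Tendsto xs Filter.atTop (nhds x) ∧
          ∀ i : ℕ, IsOpen (W i) ∧ xs i ∈ W i ∧ ∀ z ∈ W i, Φ g z = Φ g' z) →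
      ∃ O : Set X, IsOpen O ∧ x ∈ O ∧ ∀ z ∈ O, Φ g z = Φ g' z :=
  stmt15_general Φ hΦ hlqa
end

section
/- Let (X,G,Φ) be a Cantor action and suppose G(Φ) contains a non-Hausdorff element at some point x ∈ X. Then the action is wild: for every y ∈ X and every adapted neighborhood basis {U_ℓ} at y, the stabilizer chain K_ℓ := {f ∈ G(Φ) : f(z) = z for all z ∈ U_ℓ} is not eventually constant. Equivalently, the action of G(Φ) on X is not locally completely quasi-analytic. -/
open Set Topology Filter

namespace IsActionHom

variable {X : Type*} [MetricSpace X] {G : Type*} [Group G] {Φ : G → X ≃ₜ X}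

theorem symm_eq (hΦ : IsActionHom Φ) (g : G) : (Φ g).symm = Φ g⁻¹ := by
  ext z
  apply (Φ g).injective
  rw [Homeomorph.apply_symm_apply, ← hΦ.2, mul_inv_cancel, hΦ.1]

theorem id_mem_actionClosure (hΦ : IsActionHom Φ) : ContinuousMap.id X ∈ actionClosure Φ :=
  subset_closure ⟨1, ContinuousMap.ext hΦ.1⟩

theorem conj_mem_actionClosure (hΦ : IsActionHom Φ) (k : G) {f : C(X, X)}
    (hf : f ∈ actionClosure Φ) :
    ((Φ k).symm : C(X, X)).comp (f.comp (Φ k)) ∈ actionClosure Φ := by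
  refine map_mem_closure
    (f := fun u : C(X, X) => ((Φ k).symm : C(X, X)).comp (u.comp (Φ k : C(X, X))))
    (by fun_prop) hf ?_
  rintro _ ⟨g, rfl⟩
  refine ⟨k⁻¹ * g * k, ContinuousMap.ext fun z => ?_⟩
  simp only [ContinuousMap.comp_apply, ContinuousMap.coe_coe, hΦ.2, hΦ.symm_eq]

end IsActionHom

section Itinerary

variable {X : Type*} [MetricSpace X] {G : Type*} {Φ : G → X ≃ₜ X}

def itineraryClass (Φ : G → X ≃ₜ X) (V : Set X) (x : X) : Set X :=
  {z | ∀ g : G, Φ g z ∈ V ↔ Φ g x ∈ V}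

theorem mem_itineraryClass_self (Φ : G → X ≃ₜ X) (V : Set X) (x : X) :
    x ∈ itineraryClass Φ V x :=
  fun _ => Iff.rfl

theorem itineraryClass_eq_of_mem {V : Set X} {x z : X} (hz : z ∈ itineraryClass Φ V x) :
    itineraryClass Φ V z = itineraryClass Φ V x := by
  ext u
  exact forall_congr' fun g => iff_congr Iff.rfl (hz g)

theorem itineraryClass_subset [Group G] (hΦ : IsActionHom Φ) {V : Set X} {x : X} (hx : x ∈ V) :
    itineraryClass Φ V x ⊆ V := fun z hz => by
  have := hz 1
  rw [hΦ.1, hΦ.1] at this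
  exact this.2 hx

theorem image_itineraryClass [Group G] (hΦ : IsActionHom Φ) (h : G) (V : Set X) (x : X) :
    Φ h '' itineraryClass Φ V x = itineraryClass Φ V (Φ h x) := by
  ext u
  obtain ⟨z, rfl⟩ := (Φ h).surjective u
  simp only [(Φ h).injective.mem_set_image, itineraryClass, Set.mem_ofPred_eq, ← hΦ.2]
  exact ⟨fun hz g => hz (g * h), fun hz g => by simpa using hz (g * h⁻¹)⟩

theorem isClosed_itineraryClass (Φ : G → X ≃ₜ X) {V : Set X} (hV : IsClopen V) (x : X) :
    IsClosed (itineraryClass Φ V x) := by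
  simp only [itineraryClass, Set.ofPred_forall]
  refine isClosed_iInter fun g => ?_
  by_cases hg : Φ g x ∈ V
  · simp only [hg, iff_true]
    exact hV.1.preimage (Φ g).continuous
  · simp only [hg, iff_false]
    exact hV.2.isClosed_compl.preimage (Φ g).continuous

/-- Equicontinuity is what makes itinerary classes open: a clopen `V` has a uniform collar,
which no orbit of nearby points can cross. -/
theorem isOpen_itineraryClass [CompactSpace X] (hE : IsEquicontinuousAction Φ) {V : Set X}
    (hV : IsClopen V) (x : X) : IsOpen (itineraryClass Φ V x) := by
  obtain ⟨ρ, hρ, hρV⟩ := hV.1.isCompact.exists_thickening_subset_open hV.2 subset_rfl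
  have hcollar : ∀ a ∈ V, ∀ b, dist b a < ρ → b ∈ V :=
    fun a ha b hb => hρV (Metric.mem_thickening_iff.2 ⟨a, ha, hb⟩)
  obtain ⟨δ, hδ, hδE⟩ := hE ρ hρ
  refine Metric.isOpen_iff.2 fun z hz => ⟨δ, hδ, fun w hw g => ?_⟩
  have hwz : dist (Φ g w) (Φ g z) < ρ := hδE g w z hw
  refine ⟨fun h => (hz g).1 (hcollar _ h _ ?_), fun h => hcollar _ ((hz g).2 h) _ hwz⟩
  rwa [dist_comm]

theorem isAdapted_itineraryClass [CompactSpace X] [Group G] (hΦ : IsActionHom Φ)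
    (hE : IsEquicontinuousAction Φ) {V : Set X} (hV : IsClopen V) (x : X) :
    IsAdapted Φ (itineraryClass Φ V x) := by
  refine ⟨⟨x, mem_itineraryClass_self Φ V x⟩,
    ⟨isClosed_itineraryClass Φ hV x, isOpen_itineraryClass hE hV x⟩,
    fun h ⟨w, hw, hw'⟩ => ?_⟩
  rw [image_itineraryClass hΦ] at hw ⊢
  rw [← itineraryClass_eq_of_mem hw, itineraryClass_eq_of_mem hw']

theorem exists_isAdapted_subset [CompactSpace X] [TotallyDisconnectedSpace X] [Group G]
    (hΦ : IsActionHom Φ) (hE : IsEquicontinuousAction Φ) {p : X} {s : Set X}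
    (hs : s ∈ 𝓝 p) :
    ∃ U, IsAdapted Φ U ∧ p ∈ U ∧ U ⊆ s := by
  obtain ⟨V, hV, hpV, hVs⟩ := isTopologicalBasis_isClopen.mem_nhds_iff.1 hs
  exact ⟨_, isAdapted_itineraryClass hΦ hE hV p, mem_itineraryClass_self Φ V p,
    (itineraryClass_subset hΦ hpV).trans hVs⟩

end Itinerary

section NonHausdorff

variable {X : Type*} [MetricSpace X] {G : Type*} {Φ : G → X ≃ₜ X}
  {f : C(X, X)} {x : X}

theorem IsNonHausdorffElem.exists_isOpen_fixed_subset (hf : IsNonHausdorffElem Φ f x)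
    {N : Set X} (hN : N ∈ 𝓝 x) :
    ∃ O, IsOpen O ∧ O.Nonempty ∧ O ⊆ N ∧ ∀ z ∈ O, f z = z := by
  obtain ⟨xs, W, hxs, hW⟩ := hf.2.2.2
  obtain ⟨i, hi⟩ := (hxs.eventually (interior_mem_nhds.2 hN)).exists
  exact ⟨W i ∩ interior N, (hW i).2.1.isOpen.inter isOpen_interior, ⟨xs i, (hW i).1, hi⟩,
    inter_subset_right.trans interior_subset, fun z hz => (hW i).2.2.2 z hz.1⟩

theorem IsAdaptedBasis.antitone {y : X} {U : ℕ → Set X} (hU : IsAdaptedBasis Φ y U) :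
    Antitone U :=
  antitone_nat_of_succ_le fun ℓ => (hU.2.2.2.1 ℓ).subset

theorem IsAdaptedBasis.exists_subset_of_mem_nhds [CompactSpace X] {y : X} {U : ℕ → Set X}
    (hU : IsAdaptedBasis Φ y U) {s : Set X} (hs : s ∈ 𝓝 y) : ∃ ℓ, U ℓ ⊆ s :=
  exists_subset_nhds_of_isCompact hU.antitone.directed_ge
    (fun ℓ => (hU.2.1 ℓ).2.1.isClosed.isCompact) (by rw [hU.2.2.2.2]; rintro _ rfl; exact hs)

/-- Conjugating `f` by an element `k` that moves `y` into a region fixed by `f` gives an element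
of the Ellis group fixing a whole neighbourhood of `y`, hence some `U ℓ`; choosing that region
inside the itinerary class of `x` relative to `U ℓ₀` makes the conjugate act nontrivially on
`U ℓ₀`, because `f` fixes no neighbourhood of `x`. -/
theorem IsNonHausdorffElem.not_isStableChain [CompactSpace X] [Group G] (hΦ : IsActionHom Φ)
    (hmin : IsMinimalAction Φ) (hE : IsEquicontinuousAction Φ) (hf : IsNonHausdorffElem Φ f x)
    {y : X} {U : ℕ → Set X} (hU : IsAdaptedBasis Φ y U) : ¬ IsStableChain Φ U := by
  rintro ⟨ℓ₀, hstab⟩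
  have hU₀ : IsClopen (U ℓ₀) := (hU.2.1 ℓ₀).2.1
  obtain ⟨O, hO, hOne, hON, hfO⟩ := hf.exists_isOpen_fixed_subset
    ((isOpen_itineraryClass hE hU₀ x).mem_nhds (mem_itineraryClass_self Φ (U ℓ₀) x))
  obtain ⟨_, ⟨k, rfl⟩, hkO⟩ := (hmin y).exists_mem_open hO hOne
  obtain ⟨ℓ, hℓ⟩ := hU.exists_subset_of_mem_nhds
    ((hO.preimage (Φ k).continuous).mem_nhds hkO)
  set fk : C(X, X) := ((Φ k).symm : C(X, X)).comp (f.comp (Φ k))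
  have hfk_fix : ∀ w, f (Φ k w) = Φ k w → fk w = w := fun w hw => by
    simp [fk, hw]
  have hfk_stab : fk ∈ stabChain Φ U (max ℓ ℓ₀) :=
    ⟨hΦ.conj_mem_actionClosure k hf.1, fun w hw =>
      hfk_fix w (hfO _ (hℓ (hU.antitone (le_max_left ℓ ℓ₀) hw)))⟩
  rw [hstab _ (le_max_right ℓ ℓ₀)] at hfk_stab
  have hx : (Φ k).symm x ∈ U ℓ₀ := by
    rw [hΦ.symm_eq, ← (hON hkO k⁻¹), ← hΦ.2, inv_mul_cancel, hΦ.1]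
    exact hU.2.2.1 ℓ₀
  refine hf.2.2.1 _ (hU₀.preimage (Φ k).symm.continuous) hx fun z hz => ?_
  simpa [fk] using hfk_stab.2 _ hz

/-- Quasi-analyticity would propagate `f = id` from an adapted set inside a region near `x` fixed
by `f` to a small adapted neighbourhood of `x`. -/
theorem IsNonHausdorffElem.not_isLCQA [CompactSpace X] [TotallyDisconnectedSpace X] [Group G]
    (hΦ : IsActionHom Φ) (hE : IsEquicontinuousAction Φ) (hf : IsNonHausdorffElem Φ f x) :
    ¬ IsLCQA Φ := by
  rintro ⟨ε, hε, hlcqa⟩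
  obtain ⟨U, hU, hxU, hU_ball⟩ :=
    exists_isAdapted_subset hΦ hE (Metric.ball_mem_nhds x (by positivity : 0 < ε / 3))
  have hU_diam : Metric.diam U < ε := calc
    Metric.diam U ≤ Metric.diam (Metric.ball x (ε / 3)) :=
      Metric.diam_mono hU_ball Metric.isBounded_ball
    _ ≤ 2 * (ε / 3) := Metric.diam_ball (by positivity)
    _ < ε := by linarith
  obtain ⟨O, hO, ⟨p, hpO⟩, hOU, hfO⟩ :=
    hf.exists_isOpen_fixed_subset (hU.2.1.isOpen.mem_nhds hxU)
  obtain ⟨V, hV, -, hVO⟩ := exists_isAdapted_subset hΦ hE (hO.mem_nhds hpO)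
  have hf_id : ∀ z ∈ U, f z = ContinuousMap.id X z :=
    hlcqa U hU hU_diam V hV (hVO.trans hOU) f hf.1 _ hΦ.id_mem_actionClosure
      fun z hz => hfO z (hVO hz)
  exact hf.2.2.1 U hU.2.1 hxU hf_id

end NonHausdorff

theorem stmt16_general {X : Type*} [MetricSpace X] [CompactSpace X] [TotallyDisconnectedSpace X]
    {G : Type*} [Group G] (Φ : G → X ≃ₜ X) (hΦ : IsCantorAction Φ)
    (hnh : ∃ (f : C(X, X)) (x : X), IsNonHausdorffElem Φ f x) :
    (∀ (y : X) (U : ℕ → Set X), IsAdaptedBasis Φ y U → ¬ IsStableChain Φ U) ∧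
      ¬ IsLCQA Φ := by
  obtain ⟨f, x, hf⟩ := hnh
  obtain ⟨hhom, hmin, hE⟩ := hΦ
  exact ⟨fun y U hU => hf.not_isStableChain hhom hmin hE hU, hf.not_isLCQA hhom hE⟩

/-- If the Ellis group contains a non-Hausdorff element then the action
is wild, equivalently not locally completely quasi-analytic. -/
theorem stmt16 {X : Type*} [MetricSpace X] [CompactSpace X] [TotallyDisconnectedSpace X]
    [Nonempty X] (hX : Perfect (Set.univ : Set X))
    {G : Type*} [Group G] [Countable G] (Φ : G → X ≃ₜ X) (hΦ : IsCantorAction Φ)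
    (hnh : ∃ (f : C(X, X)) (x : X), IsNonHausdorffElem Φ f x) :
    (∀ (y : X) (U : ℕ → Set X), IsAdaptedBasis Φ y U → ¬ IsStableChain Φ U) ∧
      ¬ IsLCQA Φ :=
  stmt16_general Φ hΦ hnh
end
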